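/- arXiv:1612.04943 — 2 statements merged into one kernel-verified Lean document; each statement's English description precedes it below -/
import Mathlib

section
/- For positive reals α, β and b, ρ > 0, ∫₀^∞ ln(1 + bρx) [αe^{-αx} + βe^{-βx} - (α+β)e^{-(α+β)x}] dx = e^{α/(bρ)} E₁(α/(bρ)) + e^{β/(bρ)} E₁(β/(bρ)) - e^{(α+β)/(bρ)} E₁((α+β)/(bρ)), where E₁ is the exponential integral; as ρ → ∞ this tends to ln((α+β)/(αβ)) + ln(bρ) - C + o(1). -/
open MeasureTheory Real Filter

noncomputable def expInt1 (t : ℝ) : ℝ := ∫ u in Set.Ioi t, Real.exp (-u) / u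

lemma contOn_exp_div : ∀ {s : Set ℝ}, (0 : ℝ) ∉ s → ContinuousOn (fun u => Real.exp (-u) / u) s :=
  fun hs => ContinuousOn.div (Real.continuous_exp.comp continuous_neg).continuousOn
    continuous_id.continuousOn (fun x hx => fun h => hs (h ▸ hx))

lemma integrableOn_exp_div {t : ℝ} (ht : 0 < t) :
    IntegrableOn (fun u => Real.exp (-u) / u) (Set.Ioi t) := by
  have h1 : IntegrableOn (fun u => Real.exp (-(1 : ℝ) * u) * t⁻¹) (Set.Ioi t) :=
    (exp_neg_integrableOn_Ioi t zero_lt_one).mul_const _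
  refine Integrable.mono h1 ?_ ?_
  · exact ((contOn_exp_div (fun h : (0:ℝ) ∈ Set.Ioi t => lt_asymm ht (by simpa using h))).aestronglyMeasurable
      measurableSet_Ioi)
  · filter_upwards [ae_restrict_mem measurableSet_Ioi] with x hx
    have hx0 : 0 < x := ht.trans hx
    rw [Real.norm_eq_abs, Real.norm_eq_abs, abs_of_nonneg (by positivity),
      abs_of_nonneg (by positivity), div_eq_mul_inv, neg_one_mul]
    exact mul_le_mul_of_nonneg_left (inv_anti₀ ht hx.le) (Real.exp_pos _).le

lemma expInt1_split {s r : ℝ} (hs : 0 < s) (hsr : s ≤ r) :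
    expInt1 s = (∫ u in Set.Ioc s r, Real.exp (-u) / u) + expInt1 r := by
  rw [expInt1, expInt1, ← Set.Ioc_union_Ioi_eq_Ioi hsr,
    setIntegral_union (Set.Ioc_disjoint_Ioi le_rfl) measurableSet_Ioi
      ((integrableOn_exp_div hs).mono_set Set.Ioc_subset_Ioi_self)
      (integrableOn_exp_div (hs.trans_le hsr))]

lemma expInt1_hasDerivAt {t : ℝ} (ht : 0 < t) :
    HasDerivAt expInt1 (-(Real.exp (-t) / t)) t := by
  have hint : IntervalIntegrable (fun u => Real.exp (-u) / u) volume t t :=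
    IntervalIntegrable.refl
  have hF : HasDerivAt (fun s => ∫ x in t..s, Real.exp (-x) / x) (Real.exp (-t) / t) t := by
    refine intervalIntegral.integral_hasDerivAt_right hint ?_ ?_
    · exact ⟨_, (isOpen_lt continuous_const continuous_id).mem_nhds ht,
        (contOn_exp_div (fun h => lt_irrefl (0:ℝ) h.out)).aestronglyMeasurable
          (isOpen_lt continuous_const continuous_id).measurableSet⟩
    · exact (contOn_exp_div (fun h => lt_irrefl (0:ℝ) h.out)).continuousAt
        ((isOpen_lt continuous_const continuous_id).mem_nhds ht)
  have heq : expInt1 =ᶠ[nhds t] fun s => expInt1 t - ∫ x in t..s, Real.exp (-x) / x := by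
    filter_upwards [(isOpen_lt continuous_const continuous_id).mem_nhds ht] with s hs
    have hs0 : (0:ℝ) < s := hs
    rcases le_total s t with h | h
    · rw [intervalIntegral.integral_symm, intervalIntegral.integral_of_le h,
        expInt1_split hs0 h]
      ring
    · rw [intervalIntegral.integral_of_le h, expInt1_split ht h]
      ring
  simpa using ((hasDerivAt_const t (expInt1 t)).sub hF).congr_of_eventuallyEq heq

lemma expInt1_nonneg {t : ℝ} (ht : 0 < t) : 0 ≤ expInt1 t :=
  setIntegral_nonneg measurableSet_Ioi fun u hu => by
    have : 0 < u := ht.trans hu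
    positivity

lemma expInt1_tendsto_atTop : Tendsto expInt1 atTop (nhds 0) := by
  refine tendsto_of_tendsto_of_tendsto_of_le_of_le' tendsto_const_nhds
    tendsto_exp_neg_atTop_nhds_zero ?_ ?_
  · filter_upwards [eventually_gt_atTop (0:ℝ)] with t ht using expInt1_nonneg ht
  · filter_upwards [eventually_ge_atTop (1:ℝ)] with t ht
    rw [← integral_exp_neg_Ioi t]
    refine setIntegral_mono_on (integrableOn_exp_div (by linarith))
      (((exp_neg_integrableOn_Ioi t zero_lt_one)).congr_fun
        (fun x _ => by simp only [neg_one_mul]) measurableSet_Ioi) measurableSet_Ioi ?_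
    · intro u hu
      have hu1 : 1 ≤ u := ht.trans hu.out.le
      rw [div_le_iff₀ (by linarith)]
      nlinarith [Real.exp_pos (-u)]

lemma key_integral {μ c : ℝ} (hμ : 0 < μ) (hc : 0 < c) :
    IntegrableOn (fun x => Real.log (1 + c * x) * (μ * Real.exp (-(μ * x)))) (Set.Ioi 0) ∧
    ∫ x in Set.Ioi 0, Real.log (1 + c * x) * (μ * Real.exp (-(μ * x)))
      = Real.exp (μ / c) * expInt1 (μ / c) := by
  set g : ℝ → ℝ := fun x =>
    -Real.exp (-(μ * x)) * Real.log (1 + c * x) - Real.exp (μ / c) * expInt1 (μ / c + μ * x)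
    with hg
  have harg : ∀ x : ℝ, 0 ≤ x → 0 < μ / c + μ * x := fun x hx => by positivity
  have hderiv : ∀ x ∈ Set.Ici (0:ℝ),
      HasDerivAt g (Real.log (1 + c * x) * (μ * Real.exp (-(μ * x)))) x := by
    intro x hx
    have hx0 : (0:ℝ) ≤ x := hx
    have h1cx : (0:ℝ) < 1 + c * x := by positivity
    have d1 : HasDerivAt (fun y => Real.exp (-(μ * y))) (-μ * Real.exp (-(μ * x))) x := by
      have : HasDerivAt (fun y : ℝ => -(μ * y)) (-(μ * 1)) x := ((hasDerivAt_id x).const_mul μ).neg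
      simpa [mul_comm] using this.exp
    have d2 : HasDerivAt (fun y => Real.log (1 + c * y)) (c / (1 + c * x)) x := by
      have : HasDerivAt (fun y : ℝ => 1 + c * y) c x := by
        simpa using ((hasDerivAt_id x).const_mul c).const_add 1
      simpa using this.log h1cx.ne'
    have d3 : HasDerivAt (fun y => expInt1 (μ / c + μ * y))
        (-(Real.exp (-(μ / c + μ * x)) / (μ / c + μ * x)) * μ) x := by
      have inner : HasDerivAt (fun y : ℝ => μ / c + μ * y) μ x := by
        simpa using ((hasDerivAt_id x).const_mul μ).const_add (μ / c)
      exact (expInt1_hasDerivAt (harg x hx0)).comp x inner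
    have D := ((d1.mul d2).neg).sub ((d3.const_mul (Real.exp (μ / c))))
    refine HasDerivAt.congr_of_eventuallyEq (D.congr_deriv ?_)
      (Filter.Eventually.of_forall fun y => by rw [hg]; simp only [Pi.sub_apply, Pi.neg_apply, Pi.mul_apply]; ring)
    have hexp : Real.exp (μ / c) * Real.exp (-(μ / c + μ * x)) = Real.exp (-(μ * x)) := by
      rw [← Real.exp_add]; ring_nf
    have h2 : μ / (μ / c + μ * x) = c / (1 + c * x) := by
      field_simp
    calc -(-μ * Real.exp (-(μ * x)) * Real.log (1 + c * x) +
            Real.exp (-(μ * x)) * (c / (1 + c * x))) -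
          Real.exp (μ / c) * (-(Real.exp (-(μ / c + μ * x)) / (μ / c + μ * x)) * μ)
        = μ * Real.exp (-(μ * x)) * Real.log (1 + c * x)
            - Real.exp (-(μ * x)) * (c / (1 + c * x))
            + (Real.exp (μ / c) * Real.exp (-(μ / c + μ * x))) * (μ / (μ / c + μ * x)) := by
          ring
      _ = Real.log (1 + c * x) * (μ * Real.exp (-(μ * x))) := by
          rw [hexp, h2]; ring
  have hpos : ∀ x ∈ Set.Ioi (0:ℝ), 0 ≤ Real.log (1 + c * x) * (μ * Real.exp (-(μ * x))) := by
    intro x hx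
    have : (0:ℝ) < x := hx
    have h1 : (1:ℝ) ≤ 1 + c * x := by nlinarith
    exact mul_nonneg (Real.log_nonneg h1) (by positivity)
  have hcont : ContinuousWithinAt g (Set.Ici 0) 0 :=
    ((hderiv 0 Set.self_mem_Ici).continuousAt).continuousWithinAt
  have htend : Tendsto g atTop (nhds 0) := by
    have hA : Tendsto (fun x => Real.exp (-(μ * x)) * Real.log (1 + c * x)) atTop (nhds 0) := by
      have hB : Tendsto (fun x => (c / μ) * ((μ * x) ^ 1 * Real.exp (-(μ * x)))) atTop
          (nhds ((c / μ) * 0)) := by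
        exact (Filter.Tendsto.const_mul _
          ((tendsto_pow_mul_exp_neg_atTop_nhds_zero 1).comp
            (tendsto_id.const_mul_atTop hμ)))
      rw [mul_zero] at hB
      refine squeeze_zero_norm' ?_ hB
      filter_upwards [eventually_ge_atTop (0:ℝ)] with x hx
      have h1 : (0:ℝ) < 1 + c * x := by positivity
      have hlog1 : 0 ≤ Real.log (1 + c * x) := Real.log_nonneg (by nlinarith)
      have hlog2 : Real.log (1 + c * x) ≤ c * x := by
        have := Real.log_le_sub_one_of_pos h1
        linarith
      rw [Real.norm_eq_abs, abs_of_nonneg (by positivity)]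
      calc Real.exp (-(μ * x)) * Real.log (1 + c * x)
          ≤ Real.exp (-(μ * x)) * (c * x) := by
            exact mul_le_mul_of_nonneg_left hlog2 (Real.exp_pos _).le
        _ = c / μ * ((μ * x) ^ 1 * Real.exp (-(μ * x))) := by
            field_simp
    have hC : Tendsto (fun x => expInt1 (μ / c + μ * x)) atTop (nhds 0) :=
      expInt1_tendsto_atTop.comp
        (tendsto_atTop_add_const_left _ _ (tendsto_id.const_mul_atTop hμ))
    have := ((hA.neg).sub (hC.const_mul (Real.exp (μ / c))))
    simpa [hg] using this
  have hint : IntegrableOn (fun x => Real.log (1 + c * x) * (μ * Real.exp (-(μ * x))))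
      (Set.Ioi 0) :=
    integrableOn_Ioi_deriv_of_nonneg hcont (fun x hx => hderiv x hx.out.le) hpos htend
  refine ⟨hint, ?_⟩
  rw [integral_Ioi_of_hasDerivAt_of_nonneg hcont (fun x hx => hderiv x hx.out.le) hpos htend]
  simp [hg]

lemma integral_log_mul_exp_neg : ∫ t in Set.Ioi (0:ℝ), Real.log t * Real.exp (-t)
    = -Real.eulerMascheroniConstant := by
  have h1 := Complex.hasDerivAt_GammaIntegral (s := 1) (by norm_num)
  have h2 : HasDerivAt Complex.Gamma
      (∫ t : ℝ in Set.Ioi 0, (t:ℂ) ^ ((1:ℂ) - 1) * (Real.log t * Real.exp (-t))) 1 := by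
    refine h1.congr_of_eventuallyEq ?_
    have hopen : IsOpen {s : ℂ | 0 < s.re} := isOpen_lt continuous_const Complex.continuous_re
    filter_upwards [hopen.mem_nhds (by norm_num : (0:ℝ) < (1:ℂ).re)] with s hs
    exact Complex.Gamma_eq_integral hs
  have h3 := h2.unique Complex.hasDerivAt_Gamma_one
  have h4 : (∫ t : ℝ in Set.Ioi 0, (t:ℂ) ^ ((1:ℂ) - 1) * (Real.log t * Real.exp (-t)))
      = ((∫ t in Set.Ioi (0:ℝ), Real.log t * Real.exp (-t) : ℝ) : ℂ) := by
    rw [show ((∫ t in Set.Ioi (0:ℝ), Real.log t * Real.exp (-t) : ℝ) : ℂ)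
        = ∫ t in Set.Ioi (0:ℝ), ((Real.log t * Real.exp (-t) : ℝ) : ℂ) from
      (integral_ofReal).symm]
    refine setIntegral_congr_fun measurableSet_Ioi fun t ht => ?_
    simp
  rw [h4] at h3
  exact_mod_cast h3

lemma tendsto_integral_Ioc {ψ : ℝ → ℝ} (h : IntegrableOn ψ (Set.Ioc 0 1)) :
    Tendsto (fun t => ∫ u in Set.Ioc t 1, ψ u) (nhdsWithin (0:ℝ) (Set.Ioi 0))
      (nhds (∫ u in Set.Ioc 0 1, ψ u)) := by
  have hIcc : IntegrableOn ψ (Set.Icc 0 1) := (integrableOn_Icc_iff_integrableOn_Ioc (ha := enorm_ne_top)).mpr h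
  have hcont := (intervalIntegral.continuousOn_primitive hIcc) 0
    (Set.left_mem_Icc.mpr zero_le_one)
  have hprim : Tendsto (fun t => ∫ u in Set.Ioc 0 t, ψ u) (nhdsWithin (0:ℝ) (Set.Ioi 0))
      (nhds 0) := by
    have h0 : (∫ u in Set.Ioc (0:ℝ) 0, ψ u) = 0 := by simp
    have := hcont.tendsto
    rw [h0] at this
    refine this.mono_left ?_
    rw [← nhdsWithin_Ioo_eq_nhdsGT (zero_lt_one (α := ℝ))]
    exact nhdsWithin_mono _ Set.Ioo_subset_Icc_self
  have hmain := (tendsto_const_nhds (x := ∫ u in Set.Ioc (0:ℝ) 1, ψ u)).sub hprim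
  rw [sub_zero] at hmain
  refine hmain.congr' ?_
  filter_upwards [Ioo_mem_nhdsGT_of_mem (Set.left_mem_Ico.mpr zero_lt_one)] with t ht
  have hsplit : (∫ u in Set.Ioc (0:ℝ) 1, ψ u)
      = (∫ u in Set.Ioc (0:ℝ) t, ψ u) + ∫ u in Set.Ioc t 1, ψ u := by
    rw [← setIntegral_union (Set.Ioc_disjoint_Ioc_of_le le_rfl) measurableSet_Ioc
      (h.mono_set (Set.Ioc_subset_Ioc le_rfl ht.2.le))
      (h.mono_set (Set.Ioc_subset_Ioc ht.1.le le_rfl)),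
      Set.Ioc_union_Ioc_eq_Ioc ht.1.le ht.2.le]
  rw [hsplit]; ring

lemma integrableOn_log_Ioc : IntegrableOn Real.log (Set.Ioc (0:ℝ) 1) := by
  have h := intervalIntegral.integrableOn_deriv_of_nonneg (a := 0) (b := 1)
    (g := fun t => t - t * Real.log t) (g' := fun t => -Real.log t)
    ((continuous_id.sub continuous_mul_log).continuousOn)
    (fun x hx => by
      simpa using (hasDerivAt_id' x).fun_sub (Real.hasDerivAt_mul_log (ne_of_gt hx.1)))
    (fun x hx => by
      simp only [neg_nonneg]
      exact Real.log_nonpos hx.1.le hx.2.le)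
  have := h.neg
  simpa [IntegrableOn] using this.congr (Filter.Eventually.of_forall fun x => by simp)

lemma integrableOn_phi : IntegrableOn (fun u => (1 - Real.exp (-u)) / u) (Set.Ioc (0:ℝ) 1) := by
  refine Measure.integrableOn_of_bounded (M := 1) (by simp) ?_ ?_
  · exact ((measurable_const.sub (Real.measurable_exp.comp measurable_neg)).div
      measurable_id).aestronglyMeasurable
  · filter_upwards [ae_restrict_mem measurableSet_Ioc] with u hu
    have hu0 : 0 < u := hu.1
    have h1 : 1 - u ≤ Real.exp (-u) := by
      have := Real.add_one_le_exp (-u); linarith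
    have h2 : Real.exp (-u) ≤ 1 := Real.exp_le_one_iff.mpr (by linarith)
    rw [Real.norm_eq_abs, abs_of_nonneg (div_nonneg (by linarith) hu0.le),
      div_le_one hu0]
    linarith

lemma integrableOn_exp_mul_log_Ioc :
    IntegrableOn (fun u => Real.exp (-u) * Real.log u) (Set.Ioc (0:ℝ) 1) := by
  refine Integrable.mono integrableOn_log_Ioc ?_ ?_
  · exact (((Real.continuous_exp.comp continuous_neg).continuousOn.mul
      (Real.continuousOn_log.mono (fun x hx => ne_of_gt hx.1))).aestronglyMeasurable
        measurableSet_Ioc)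
  · filter_upwards [ae_restrict_mem measurableSet_Ioc] with u hu
    have h2 : Real.exp (-u) ≤ 1 := Real.exp_le_one_iff.mpr (by linarith [hu.1])
    rw [Real.norm_eq_abs, Real.norm_eq_abs, abs_mul]
    calc |Real.exp (-u)| * |Real.log u| ≤ 1 * |Real.log u| :=
          mul_le_mul_of_nonneg_right (by rwa [abs_of_nonneg (Real.exp_pos _).le]) (abs_nonneg _)
      _ = |Real.log u| := one_mul _

lemma J_eq : (∫ u in Set.Ioc (0:ℝ) 1, Real.exp (-u) * Real.log u)
    = -(∫ u in Set.Ioc (0:ℝ) 1, (1 - Real.exp (-u)) / u) := by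
  set ψ : ℝ → ℝ := fun u => -(Real.exp (-u) * Real.log u) - (1 - Real.exp (-u)) / u with hψ
  have hneg : IntegrableOn (fun u => -(Real.exp (-u) * Real.log u)) (Set.Ioc (0:ℝ) 1) :=
    integrableOn_exp_mul_log_Ioc.neg
  have hψint : IntegrableOn ψ (Set.Ioc (0:ℝ) 1) := hneg.sub integrableOn_phi
  have h1 : Tendsto (fun t => ∫ u in Set.Ioc t 1, ψ u) (nhdsWithin (0:ℝ) (Set.Ioi 0))
      (nhds ((∫ u in Set.Ioc (0:ℝ) 1, -(Real.exp (-u) * Real.log u))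
        - ∫ u in Set.Ioc (0:ℝ) 1, (1 - Real.exp (-u)) / u)) := by
    have h := tendsto_integral_Ioc hψint
    have : (∫ u in Set.Ioc (0:ℝ) 1, ψ u)
        = (∫ u in Set.Ioc (0:ℝ) 1, -(Real.exp (-u) * Real.log u))
          - ∫ u in Set.Ioc (0:ℝ) 1, (1 - Real.exp (-u)) / u := by
      rw [← integral_sub hneg integrableOn_phi]
    rwa [this] at h
  have h2 : Tendsto (fun t => ∫ u in Set.Ioc t 1, ψ u) (nhdsWithin (0:ℝ) (Set.Ioi 0))
      (nhds 0) := by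
    have hb : Tendsto (fun t : ℝ => |Real.log t * t ^ (1:ℝ)|) (nhdsWithin (0:ℝ) (Set.Ioi 0))
        (nhds 0) := by
      have := (tendsto_log_mul_rpow_nhdsGT_zero zero_lt_one).abs
      simpa using this
    have heq : ∀ᶠ t in nhdsWithin (0:ℝ) (Set.Ioi 0),
        (∫ u in Set.Ioc t 1, ψ u) = (1 - Real.exp (-t)) * Real.log t := by
      filter_upwards [Ioo_mem_nhdsGT_of_mem (Set.left_mem_Ico.mpr zero_lt_one)] with t ht
      have ht0 : (0:ℝ) < t := ht.1
      have ht1 : t ≤ 1 := ht.2.le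
      have hF : ∀ x ∈ Set.uIcc t 1, HasDerivAt (fun u => (Real.exp (-u) - 1) * Real.log u)
          (ψ x) x := by
        intro x hx
        rw [Set.uIcc_of_le ht1] at hx
        have hx0 : 0 < x := lt_of_lt_of_le ht0 hx.1
        have d1 : HasDerivAt (fun u : ℝ => Real.exp (-u) - 1) (-Real.exp (-x)) x := by
          simpa using ((Real.hasDerivAt_exp (-x)).comp x (hasDerivAt_neg x)).sub_const 1
        have d2 : HasDerivAt Real.log x⁻¹ x := Real.hasDerivAt_log (ne_of_gt hx0)
        refine (d1.mul d2).congr_deriv ?_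
        rw [hψ]
        field_simp
        ring
      have hcontd : ContinuousOn ψ (Set.uIcc t 1) := by
        rw [Set.uIcc_of_le ht1]
        have hne : ∀ x ∈ Set.Icc t 1, x ≠ 0 := fun x hx => ne_of_gt (lt_of_lt_of_le ht0 hx.1)
        exact (((Real.continuous_exp.comp continuous_neg).continuousOn.mul
          (Real.continuousOn_log.mono hne)).neg).sub
          (((continuous_const.sub (Real.continuous_exp.comp continuous_neg)).continuousOn).div
            continuous_id.continuousOn hne)
      have hFTC := intervalIntegral.integral_eq_sub_of_hasDerivAt hF
        (hcontd.intervalIntegrable)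
      rw [intervalIntegral.integral_of_le ht1] at hFTC
      rw [hFTC]
      simp [Real.log_one]
      ring
    refine squeeze_zero_norm' ?_ hb
    filter_upwards [heq, Ioo_mem_nhdsGT_of_mem (Set.left_mem_Ico.mpr zero_lt_one)] with t h1 h2
    rw [h1]
    have ht0 : (0:ℝ) < t := h2.1
    have hexp1 : Real.exp (-t) ≤ 1 := Real.exp_le_one_iff.mpr (by linarith)
    have hexp2 : 1 - t ≤ Real.exp (-t) := by have := Real.add_one_le_exp (-t); linarith
    rw [Real.norm_eq_abs, abs_mul, Real.rpow_one, abs_mul]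
    have : |1 - Real.exp (-t)| ≤ |t| := by
      rw [abs_of_nonneg (by linarith), abs_of_nonneg ht0.le]; linarith
    calc |1 - Real.exp (-t)| * |Real.log t| ≤ |t| * |Real.log t| :=
          mul_le_mul_of_nonneg_right this (abs_nonneg _)
      _ = |Real.log t| * |t| := mul_comm _ _
  have := tendsto_nhds_unique h1 h2
  have hJ : (∫ u in Set.Ioc (0:ℝ) 1, -(Real.exp (-u) * Real.log u))
      = -(∫ u in Set.Ioc (0:ℝ) 1, Real.exp (-u) * Real.log u) := by
    rw [integral_neg]
  rw [hJ] at this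
  linarith

lemma integrableOn_log_exp_Ioi :
    IntegrableOn (fun t => Real.log t * Real.exp (-t)) (Set.Ioi (1:ℝ)) := by
  have hg : IntegrableOn (fun x => Real.exp (-x) * x ^ ((2:ℝ) - 1)) (Set.Ioi (1:ℝ)) :=
    (Real.GammaIntegral_convergent (by norm_num : (0:ℝ) < 2)).mono_set
      (Set.Ioi_subset_Ioi zero_le_one)
  refine Integrable.mono hg ?_ ?_
  · have hne : ∀ x ∈ Set.Ioi (1:ℝ), x ≠ 0 := fun x hx => by
      have : (1:ℝ) < x := hx; positivity
    exact ((Real.continuousOn_log.mono hne).mul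
      (Real.continuous_exp.comp continuous_neg).continuousOn).aestronglyMeasurable
        measurableSet_Ioi
  · filter_upwards [ae_restrict_mem measurableSet_Ioi] with x hx
    have hx1 : (1:ℝ) < x := hx
    have hlog : 0 ≤ Real.log x := Real.log_nonneg hx1.le
    have hlogx : Real.log x ≤ x := by
      have := Real.log_le_sub_one_of_pos (by linarith : (0:ℝ) < x); linarith
    rw [Real.norm_eq_abs, Real.norm_eq_abs, abs_mul, abs_of_nonneg hlog,
      abs_of_nonneg (by positivity : (0:ℝ) ≤ Real.exp (-x) * x ^ ((2:ℝ) - 1)), abs_of_nonneg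
        (Real.exp_pos _).le]
    have : x ^ ((2:ℝ) - 1) = x := by
      norm_num
    rw [this]
    calc Real.log x * Real.exp (-x) ≤ x * Real.exp (-x) :=
          mul_le_mul_of_nonneg_right hlogx (Real.exp_pos _).le
      _ = Real.exp (-x) * x := mul_comm _ _

lemma integral_log_exp_Ioi_one :
    (∫ t in Set.Ioi (1:ℝ), Real.log t * Real.exp (-t)) = expInt1 1 := by
  set g : ℝ → ℝ := fun x => -Real.exp (-x) * Real.log x with hg
  have hderiv : ∀ x ∈ Set.Ici (1:ℝ), HasDerivAt g
      (Real.log x * Real.exp (-x) - Real.exp (-x) / x) x := by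
    intro x hx
    have hx1 : (1:ℝ) ≤ x := hx
    have hx0 : (0:ℝ) < x := lt_of_lt_of_le zero_lt_one hx1
    have d1 : HasDerivAt (fun y : ℝ => -Real.exp (-y)) (Real.exp (-x)) x := by
      simpa using (hasDerivAt_neg' x).exp.fun_neg
    have d2 : HasDerivAt Real.log x⁻¹ x := Real.hasDerivAt_log (ne_of_gt hx0)
    refine (d1.mul d2).congr_deriv ?_
    field_simp
    ring
  have hint : IntegrableOn (fun x => Real.log x * Real.exp (-x) - Real.exp (-x) / x)
      (Set.Ioi (1:ℝ)) := integrableOn_log_exp_Ioi.sub (integrableOn_exp_div zero_lt_one)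
  have htend : Tendsto g atTop (nhds 0) := by
    have : Tendsto (fun x => Real.exp (-x) * Real.log x) atTop (nhds 0) := by
      have hB : Tendsto (fun x : ℝ => x ^ 1 * Real.exp (-x)) atTop (nhds 0) :=
        tendsto_pow_mul_exp_neg_atTop_nhds_zero 1
      refine squeeze_zero_norm' ?_ (by simpa using hB.abs)
      filter_upwards [eventually_ge_atTop (1:ℝ)] with x hx
      have hx0 : (0:ℝ) < x := lt_of_lt_of_le zero_lt_one hx
      have hlog : 0 ≤ Real.log x := Real.log_nonneg hx
      have hlogx : Real.log x ≤ x := by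
        have := Real.log_le_sub_one_of_pos hx0; linarith
      rw [Real.norm_eq_abs, abs_mul, abs_of_nonneg (Real.exp_pos _).le, abs_of_nonneg hlog]
      rw [abs_of_nonneg hx0.le]
      calc Real.exp (-x) * Real.log x ≤ Real.exp (-x) * x :=
            mul_le_mul_of_nonneg_left hlogx (Real.exp_pos _).le
        _ = x * Real.exp (-x) := by ring
    have := this.neg
    simpa [hg] using this
  have hcont : ContinuousWithinAt g (Set.Ici 1) 1 :=
    (hderiv 1 Set.self_mem_Ici).continuousAt.continuousWithinAt
  have hFTC := integral_Ioi_of_hasDerivAt_of_tendsto hcont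
    (fun x hx => hderiv x hx.out.le) hint htend
  have hg1 : g 1 = 0 := by simp [hg]
  rw [hg1, sub_zero] at hFTC
  rw [integral_sub integrableOn_log_exp_Ioi (integrableOn_exp_div zero_lt_one)] at hFTC
  have : (∫ x in Set.Ioi (1:ℝ), Real.exp (-x) / x) = expInt1 1 := rfl
  rw [this] at hFTC
  linarith

lemma expInt1_one_eq : expInt1 1
    = -Real.eulerMascheroniConstant + ∫ u in Set.Ioc (0:ℝ) 1, (1 - Real.exp (-u)) / u := by
  have hsplit : (∫ t in Set.Ioi (0:ℝ), Real.log t * Real.exp (-t))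
      = (∫ t in Set.Ioc (0:ℝ) 1, Real.log t * Real.exp (-t))
        + ∫ t in Set.Ioi (1:ℝ), Real.log t * Real.exp (-t) := by
    rw [← setIntegral_union (Set.Ioc_disjoint_Ioi le_rfl) measurableSet_Ioi
      (integrableOn_exp_mul_log_Ioc.congr_fun (fun x _ => mul_comm _ _) measurableSet_Ioc)
      integrableOn_log_exp_Ioi, Set.Ioc_union_Ioi_eq_Ioi zero_le_one]
  have h1 : (∫ t in Set.Ioc (0:ℝ) 1, Real.log t * Real.exp (-t))
      = -(∫ u in Set.Ioc (0:ℝ) 1, (1 - Real.exp (-u)) / u) := by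
    rw [← J_eq]
    exact setIntegral_congr_fun measurableSet_Ioc fun x _ => mul_comm _ _
  rw [integral_log_mul_exp_neg, h1, integral_log_exp_Ioi_one] at hsplit
  linarith

lemma tendsto_expInt1_add_log :
    Tendsto (fun t => expInt1 t + Real.log t) (nhdsWithin (0:ℝ) (Set.Ioi 0))
      (nhds (-Real.eulerMascheroniConstant)) := by
  have hmain : Tendsto (fun t => expInt1 1 - ∫ u in Set.Ioc t 1, (1 - Real.exp (-u)) / u)
      (nhdsWithin (0:ℝ) (Set.Ioi 0)) (nhds (-Real.eulerMascheroniConstant)) := by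
    have := (tendsto_const_nhds (x := expInt1 1)).sub (tendsto_integral_Ioc integrableOn_phi)
    rw [show expInt1 1 - ∫ u in Set.Ioc (0:ℝ) 1, (1 - Real.exp (-u)) / u
      = -Real.eulerMascheroniConstant from by rw [expInt1_one_eq]; ring] at this
    exact this
  refine hmain.congr' ?_
  filter_upwards [Ioo_mem_nhdsGT_of_mem (Set.left_mem_Ico.mpr zero_lt_one)] with t ht
  have ht0 : (0:ℝ) < t := ht.1
  have ht1 : t ≤ 1 := ht.2.le
  have hcont1 : IntegrableOn (fun u => Real.exp (-u) / u) (Set.Ioc t 1) :=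
    (integrableOn_exp_div ht0).mono_set Set.Ioc_subset_Ioi_self
  have hcont2 : IntegrableOn (fun u : ℝ => u⁻¹) (Set.Ioc t 1) := by
    refine ContinuousOn.integrableOn_compact isCompact_Icc ?_ |>.mono_set Set.Ioc_subset_Icc_self
    exact continuousOn_inv₀.mono fun x hx => ne_of_gt (lt_of_lt_of_le ht0 hx.1)
  have hlog : Real.log t = -∫ u in Set.Ioc t 1, u⁻¹ := by
    rw [← intervalIntegral.integral_of_le ht1, integral_inv_of_pos ht0 zero_lt_one]
    rw [Real.log_div one_ne_zero (ne_of_gt ht0)]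
    simp
  have hsplit := expInt1_split ht0 ht1
  rw [hsplit, hlog]
  rw [show (∫ u in Set.Ioc t 1, Real.exp (-u) / u) + expInt1 1 + -∫ u in Set.Ioc t 1, u⁻¹
    = expInt1 1 + ((∫ u in Set.Ioc t 1, Real.exp (-u) / u) - ∫ u in Set.Ioc t 1, u⁻¹) from by
      ring]
  rw [← integral_sub hcont1 hcont2]
  have : ∀ u ∈ Set.Ioc t 1, Real.exp (-u) / u - u⁻¹ = -((1 - Real.exp (-u)) / u) := by
    intro u hu
    have hu0 : 0 < u := ht0.trans hu.1
    field_simp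
    ring
  rw [setIntegral_congr_fun measurableSet_Ioc this, integral_neg]
  ring

lemma tendsto_h :
    Tendsto (fun t => Real.exp t * expInt1 t + Real.log t + Real.eulerMascheroniConstant)
      (nhdsWithin (0:ℝ) (Set.Ioi 0)) (nhds 0) := by
  have h1 : Tendsto (fun t => Real.exp t * (expInt1 t + Real.log t + Real.eulerMascheroniConstant))
      (nhdsWithin (0:ℝ) (Set.Ioi 0)) (nhds 0) := by
    have hexp : Tendsto (fun t : ℝ => Real.exp t) (nhdsWithin (0:ℝ) (Set.Ioi 0)) (nhds 1) := by
      have := Real.continuous_exp.tendsto 0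
      rw [Real.exp_zero] at this
      exact this.mono_left nhdsWithin_le_nhds
    have hsum : Tendsto (fun t => expInt1 t + Real.log t + Real.eulerMascheroniConstant)
        (nhdsWithin (0:ℝ) (Set.Ioi 0)) (nhds 0) := by
      have := tendsto_expInt1_add_log.add
        (tendsto_const_nhds (x := Real.eulerMascheroniConstant))
      simpa using this
    simpa using hexp.mul hsum
  have h2 : Tendsto (fun t => (1 - Real.exp t) * (Real.log t + Real.eulerMascheroniConstant))
      (nhdsWithin (0:ℝ) (Set.Ioi 0)) (nhds 0) := by
    have h2a : Tendsto (fun t : ℝ => (1 - Real.exp t) * Real.log t)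
        (nhdsWithin (0:ℝ) (Set.Ioi 0)) (nhds 0) := by
      have hb : Tendsto (fun t : ℝ => Real.exp 1 * |Real.log t * t ^ (1:ℝ)|)
          (nhdsWithin (0:ℝ) (Set.Ioi 0)) (nhds 0) := by
        have := ((tendsto_log_mul_rpow_nhdsGT_zero zero_lt_one).abs).const_mul (Real.exp 1)
        simpa using this
      refine squeeze_zero_norm' ?_ hb
      filter_upwards [Ioo_mem_nhdsGT_of_mem (Set.left_mem_Ico.mpr zero_lt_one)] with t ht
      have ht0 : (0:ℝ) < t := ht.1
      have ht1 : t < 1 := ht.2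
      have hexpb : Real.exp t - 1 ≤ Real.exp 1 * t := by
        have e0 : 1 - t ≤ Real.exp (-t) := by have := Real.add_one_le_exp (-t); linarith
        have e1 : Real.exp t * (1 - t) ≤ Real.exp t * Real.exp (-t) :=
          mul_le_mul_of_nonneg_left e0 (Real.exp_pos t).le
        have e2 : Real.exp t * Real.exp (-t) = 1 := by rw [← Real.exp_add]; simp
        have e3 : t * Real.exp t ≤ t * Real.exp 1 :=
          mul_le_mul_of_nonneg_left (Real.exp_le_exp.mpr ht1.le) ht0.le
        nlinarith
      have hexp1 : 1 ≤ Real.exp t := by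
        have := Real.add_one_le_exp t; linarith
      rw [Real.norm_eq_abs, abs_mul, Real.rpow_one, abs_mul]
      have hbound : |1 - Real.exp t| ≤ Real.exp 1 * |t| := by
        rw [abs_of_nonpos (by linarith), abs_of_nonneg ht0.le]
        linarith
      calc |1 - Real.exp t| * |Real.log t| ≤ (Real.exp 1 * |t|) * |Real.log t| :=
            mul_le_mul_of_nonneg_right hbound (abs_nonneg _)
        _ = Real.exp 1 * (|Real.log t| * |t|) := by ring
    have h2b : Tendsto (fun t : ℝ => (1 - Real.exp t) * Real.eulerMascheroniConstant)
        (nhdsWithin (0:ℝ) (Set.Ioi 0)) (nhds 0) := by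
      have hexp : Tendsto (fun t : ℝ => 1 - Real.exp t) (nhdsWithin (0:ℝ) (Set.Ioi 0))
          (nhds 0) := by
        have := (Real.continuous_exp.tendsto 0).const_sub 1
        rw [Real.exp_zero, sub_self] at this
        exact this.mono_left nhdsWithin_le_nhds
      simpa using hexp.mul_const Real.eulerMascheroniConstant
    have := h2a.add h2b
    rw [add_zero] at this
    refine this.congr fun t => by ring
  have := h1.add h2
  rw [add_zero] at this
  refine this.congr fun t => by ring


/-- Key integral in the A³-AS sum-rate analysis: for `α, β, b, ρ > 0`,
`∫₀^∞ ln(1+bρx)[αe^{-αx} + βe^{-βx} - (α+β)e^{-(α+β)x}] dx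
  = e^{α/(bρ)}E₁(α/(bρ)) + e^{β/(bρ)}E₁(β/(bρ)) - e^{(α+β)/(bρ)}E₁((α+β)/(bρ))`,
and as `ρ → ∞` the integral tends to `ln((α+β)/(αβ)) + ln(bρ) - C + o(1)`. -/
theorem integral_log_signed_exp_combination {α β b : ℝ}
    (hα : 0 < α) (hβ : 0 < β) (hb : 0 < b) :
    (∀ ρ : ℝ, 0 < ρ →
      ∫ x in Set.Ioi (0 : ℝ), Real.log (1 + b * ρ * x) *
          (α * Real.exp (-(α * x)) + β * Real.exp (-(β * x)) -
            (α + β) * Real.exp (-((α + β) * x))) =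
        Real.exp (α / (b * ρ)) * expInt1 (α / (b * ρ)) +
          Real.exp (β / (b * ρ)) * expInt1 (β / (b * ρ)) -
          Real.exp ((α + β) / (b * ρ)) * expInt1 ((α + β) / (b * ρ))) ∧
    Filter.Tendsto (fun ρ : ℝ =>
      (∫ x in Set.Ioi (0 : ℝ), Real.log (1 + b * ρ * x) *
          (α * Real.exp (-(α * x)) + β * Real.exp (-(β * x)) -
            (α + β) * Real.exp (-((α + β) * x)))) -
        (Real.log ((α + β) / (α * β)) + Real.log (b * ρ) -
          Real.eulerMascheroniConstant)) Filter.atTop (nhds 0) := by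
  have hαβ : 0 < α + β := by linarith
  have hpart1 : ∀ ρ : ℝ, 0 < ρ →
      ∫ x in Set.Ioi (0 : ℝ), Real.log (1 + b * ρ * x) *
          (α * Real.exp (-(α * x)) + β * Real.exp (-(β * x)) -
            (α + β) * Real.exp (-((α + β) * x))) =
        Real.exp (α / (b * ρ)) * expInt1 (α / (b * ρ)) +
          Real.exp (β / (b * ρ)) * expInt1 (β / (b * ρ)) -
          Real.exp ((α + β) / (b * ρ)) * expInt1 ((α + β) / (b * ρ)) := by
    intro ρ hρ
    have hc : 0 < b * ρ := mul_pos hb hρ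
    obtain ⟨hintα, hvalα⟩ := key_integral hα hc
    obtain ⟨hintβ, hvalβ⟩ := key_integral hβ hc
    obtain ⟨hintc, hvalc⟩ := key_integral hαβ hc
    have hcongr : ∀ x ∈ Set.Ioi (0:ℝ),
        Real.log (1 + b * ρ * x) *
          (α * Real.exp (-(α * x)) + β * Real.exp (-(β * x)) -
            (α + β) * Real.exp (-((α + β) * x)))
        = (Real.log (1 + b * ρ * x) * (α * Real.exp (-(α * x)))
            + Real.log (1 + b * ρ * x) * (β * Real.exp (-(β * x))))
          - Real.log (1 + b * ρ * x) * ((α + β) * Real.exp (-((α + β) * x))) := by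
      intro x _; ring
    have e1 := integral_sub (hintα.add hintβ) hintc
    simp only [Pi.add_apply] at e1
    rw [setIntegral_congr_fun measurableSet_Ioi hcongr, e1, integral_add hintα hintβ,
      hvalα, hvalβ, hvalc]
  refine ⟨hpart1, ?_⟩
  have htt : ∀ μ : ℝ, 0 < μ →
      Tendsto (fun ρ => μ / (b * ρ)) atTop (nhdsWithin (0:ℝ) (Set.Ioi 0)) := by
    intro μ hμ
    rw [tendsto_nhdsWithin_iff]
    constructor
    · exact Tendsto.div_atTop tendsto_const_nhds (tendsto_id.const_mul_atTop hb)
    · filter_upwards [eventually_gt_atTop (0:ℝ)] with ρ hρ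
      have : 0 < b * ρ := mul_pos hb hρ
      exact Set.mem_Ioi.mpr (by positivity)
  have hH := tendsto_h
  have hcomb := ((hH.comp (htt α hα)).add (hH.comp (htt β hβ))).sub (hH.comp (htt (α+β) hαβ))
  rw [show ((0:ℝ) + 0) - 0 = 0 from by ring] at hcomb
  refine hcomb.congr' ?_
  filter_upwards [eventually_gt_atTop (0:ℝ)] with ρ hρ
  have hbρ : 0 < b * ρ := mul_pos hb hρ
  have hlogα : Real.log (α / (b * ρ)) = Real.log α - Real.log (b * ρ) :=
    Real.log_div hα.ne' hbρ.ne'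
  have hlogβ : Real.log (β / (b * ρ)) = Real.log β - Real.log (b * ρ) :=
    Real.log_div hβ.ne' hbρ.ne'
  have hlogc : Real.log ((α + β) / (b * ρ)) = Real.log (α + β) - Real.log (b * ρ) :=
    Real.log_div hαβ.ne' hbρ.ne'
  have hlogt : Real.log ((α + β) / (α * β)) = Real.log (α + β) - (Real.log α + Real.log β) := by
    rw [Real.log_div hαβ.ne' (by positivity), Real.log_mul hα.ne' hβ.ne']
  simp only [Function.comp]
  rw [hpart1 ρ hρ, hlogα, hlogβ, hlogc, hlogt]
  ring
end

section
/- For Ω_g, Ω_h > 0 and μ = Ω_h (in the role of the outer exponential rate), ∫₀^∞ (∫_x^∞ ln y · Ω_g e^{-Ω_g y} dy) Ω_h e^{-Ω_h x} dx = ∫₀^∞ (ln x e^{-Ω_g x} - Ei(-Ω_g x)) Ω_h e^{-Ω_h x} dx, and this equals ln((Ω_h + Ω_g)/Ω_g) - Ω_h (C + ln(Ω_h + Ω_g))/(Ω_h + Ω_g). -/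
/-!
Integrating the inner integral by parts (`u = log`, `v = -e^{-Ω_g y}`) leaves
`log x · e^{-Ω_g x}` plus the exponential integral `∫_{Ω_g x}^∞ e^{-u}/u du`, which is the first
identity. For the closed form, Fubini turns the double integral into
`∫₀^∞ log y · Ω_g e^{-Ω_g y} (1 - e^{-Ω_h y}) dy`, a difference of two Laplace transforms of `log`;
by rescaling, `∫₀^∞ log x · e^{-a x} dx = -(γ + log a)/a`, where
`-γ = Γ'(1) = ∫₀^∞ log t · e^{-t} dt`.
-/

open MeasureTheory Real Set Filter Topology

theorem integral_ofReal_log_mul_exp_neg :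
    ∫ t in Ioi (0 : ℝ), ((log t * exp (-t) : ℝ) : ℂ) = -(eulerMascheroniConstant : ℂ) := by
  have hGammaIntegral := Complex.hasDerivAt_GammaIntegral (s := 1) one_pos
  simp only [sub_self, Complex.cpow_zero, one_mul] at hGammaIntegral
  have hGamma : Complex.Gamma =ᶠ[𝓝 1] Complex.GammaIntegral := by
    filter_upwards [Complex.continuous_re.isOpen_preimage _ isOpen_Ioi |>.mem_nhds
      (show (1 : ℂ).re ∈ Ioi 0 by simp)] with s hs
    exact Complex.Gamma_eq_integral hs
  simp only [Complex.ofReal_mul]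
  exact (hGammaIntegral.congr_of_eventuallyEq hGamma).unique Complex.hasDerivAt_Gamma_one

-- A non-integrable function has integral `0`, while this one has integral `-γ ≠ 0`.
theorem integrableOn_log_mul_exp_neg : IntegrableOn (fun t => log t * exp (-t)) (Ioi 0) := by
  have hγ : -(eulerMascheroniConstant : ℂ) ≠ 0 := by
    exact_mod_cast neg_ne_zero.mpr (one_half_pos.trans one_half_lt_eulerMascheroniConstant).ne'
  rw [← integral_ofReal_log_mul_exp_neg] at hγ
  have h := (Integrable.of_integral_ne_zero hγ).re
  simp only [RCLike.re_to_complex, Complex.ofReal_re] at h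
  exact h

theorem integral_log_mul_exp_neg_s15 :
    ∫ t in Ioi (0 : ℝ), log t * exp (-t) = -eulerMascheroniConstant := by
  exact_mod_cast integral_complex_ofReal.symm.trans integral_ofReal_log_mul_exp_neg

theorem log_mul_exp_neg_mul_eqOn {a : ℝ} (ha : 0 < a) :
    EqOn (fun x => log x * exp (-(a * x)))
      (fun x => log (a * x) * exp (-(a * x)) - log a * exp (-(a * x))) (Ioi 0) := by
  intro x hx
  dsimp only
  rw [log_mul ha.ne' (ne_of_gt hx)]
  ring

theorem integrableOn_log_mul_exp_neg_mul {a : ℝ} (ha : 0 < a) :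
    IntegrableOn (fun x => log x * exp (-(a * x))) (Ioi 0) := by
  have h : IntegrableOn (fun t => log t * exp (-t) - log a * exp (-t)) (Ioi (a * 0)) := by
    rw [mul_zero]
    exact integrableOn_log_mul_exp_neg.sub ((integrableOn_exp_neg_Ioi 0).const_mul _)
  exact ((integrableOn_Ioi_comp_mul_left_iff _ 0 ha).2 h).congr_fun
    (log_mul_exp_neg_mul_eqOn ha).symm measurableSet_Ioi

theorem integrableOn_log_mul_mul_exp_neg_mul {b : ℝ} (hb : 0 < b) :
    IntegrableOn (fun y => log y * (b * exp (-(b * y)))) (Ioi 0) :=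
  IntegrableOn.congr_fun ((integrableOn_log_mul_exp_neg_mul hb).const_mul b)
    (fun y _ => by ring) measurableSet_Ioi

theorem integral_log_mul_exp_neg_mul {a : ℝ} (ha : 0 < a) :
    ∫ x in Ioi (0 : ℝ), log x * exp (-(a * x)) = -(eulerMascheroniConstant + log a) / a := by
  rw [setIntegral_congr_fun measurableSet_Ioi (log_mul_exp_neg_mul_eqOn ha),
    integral_comp_mul_left_Ioi (fun t => log t * exp (-t) - log a * exp (-t)) 0 ha, mul_zero,
    integral_sub integrableOn_log_mul_exp_neg ((integrableOn_exp_neg_Ioi 0).const_mul _),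
    integral_const_mul, integral_log_mul_exp_neg_s15, integral_exp_neg_Ioi_zero, smul_eq_mul]
  field_simp
  ring

theorem hasDerivAt_neg_exp_neg_mul (b y : ℝ) :
    HasDerivAt (fun t => -exp (-(b * t))) (b * exp (-(b * y))) y := by
  have h := (((hasDerivAt_id y).const_mul b).neg.exp).neg
  simp only [id, mul_one, mul_neg, neg_neg] at h
  rw [mul_comm]
  exact h

theorem tendsto_log_mul_exp_neg_mul_atTop {b : ℝ} (hb : 0 < b) :
    Tendsto (fun y => log y * exp (-(b * y))) atTop (𝓝 0) := by
  have h : log =o[atTop] fun y => exp (b * y) :=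
    isLittleO_log_id_atTop.trans (isLittleO_pow_exp_pos_mul_atTop 1 hb |>.congr_left (by simp))
  simpa [exp_neg, div_eq_mul_inv] using h.tendsto_div_nhds_zero

theorem integrableOn_exp_neg_mul_div_Ioi {b x : ℝ} (hb : 0 < b) (hx : 0 < x) :
    IntegrableOn (fun y => exp (-(b * y)) / y) (Ioi x) := by
  refine ((exp_neg_integrableOn_Ioi x hb).div_const x).mono' ?_ ?_
  · exact (ContinuousOn.div (by fun_prop) continuousOn_id
      fun y hy => (hx.trans hy).ne').aestronglyMeasurable measurableSet_Ioi
  · refine (ae_restrict_iff' measurableSet_Ioi).2 (.of_forall fun y hy => ?_)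
    rw [norm_div, norm_of_nonneg (exp_pos _).le, norm_of_nonneg (hx.trans hy).le, neg_mul]
    exact div_le_div_of_nonneg_left (exp_pos _).le hx (le_of_lt hy)

theorem integral_exp_neg_mul_div_Ioi (x : ℝ) {b : ℝ} (hb : 0 < b) :
    ∫ y in Ioi x, exp (-(b * y)) / y = ∫ u in Ioi (b * x), exp (-u) / u := by
  rw [← integral_comp_mul_left_Ioi' _ x hb, smul_eq_mul, ← integral_const_mul]
  refine setIntegral_congr_fun measurableSet_Ioi fun y _ => ?_
  field_simp

theorem integral_Ioi_log_mul_exp_neg_mul {b x : ℝ} (hb : 0 < b) (hx : 0 < x) :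
    ∫ y in Ioi x, log y * (b * exp (-(b * y))) =
      log x * exp (-(b * x)) + ∫ u in Ioi (b * x), exp (-u) / u := by
  have hu (y : ℝ) (hy : y ∈ Ioi x) : HasDerivAt log y⁻¹ y := hasDerivAt_log (hx.trans hy).ne'
  have huv' : IntegrableOn (fun y => log y * (b * exp (-(b * y)))) (Ioi x) :=
    (integrableOn_log_mul_mul_exp_neg_mul hb).mono_set (Ioi_subset_Ioi hx.le)
  have hu'v : IntegrableOn (fun y => y⁻¹ * -exp (-(b * y))) (Ioi x) :=
    (integrableOn_exp_neg_mul_div_Ioi hb hx).neg.congr_fun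
      (fun y _ => by simp only [Pi.neg_apply]; ring) measurableSet_Ioi
  have h_zero : Tendsto (fun y => log y * -exp (-(b * y))) (𝓝[>] x)
      (𝓝 (log x * -exp (-(b * x)))) :=
    ((continuousAt_log hx.ne').mul (by fun_prop)).tendsto.mono_left nhdsWithin_le_nhds
  have h_infty : Tendsto (fun y => log y * -exp (-(b * y))) atTop (𝓝 0) := by
    simpa using (tendsto_log_mul_exp_neg_mul_atTop hb).neg
  rw [integral_Ioi_mul_deriv_eq_deriv_mul hu (fun y _ => hasDerivAt_neg_exp_neg_mul b y)
    huv' hu'v h_zero h_infty, ← integral_exp_neg_mul_div_Ioi x hb]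
  simp only [mul_neg, integral_neg, ← div_eq_inv_mul]
  ring

theorem integral_Ioi_integral_Ioi_mul {g w : ℝ → ℝ} (hg : IntegrableOn g (Ioi 0))
    (hw : IntegrableOn w (Ioi 0)) :
    ∫ x in Ioi (0 : ℝ), (∫ y in Ioi x, g y) * w x =
      ∫ y in Ioi (0 : ℝ), g y * ∫ x in (0)..y, w x := by
  set F : ℝ × ℝ → ℝ := {p | p.1 < p.2}.indicator fun p => w p.1 * g p.2
  have hF : Integrable F ((volume.restrict (Ioi 0)).prod (volume.restrict (Ioi 0))) :=
    (hw.mul_prod hg).indicator (measurableSet_lt measurable_fst measurable_snd)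
  calc ∫ x in Ioi (0 : ℝ), (∫ y in Ioi x, g y) * w x
      = ∫ x in Ioi (0 : ℝ), ∫ y in Ioi (0 : ℝ), (Ioi x).indicator (fun y => w x * g y) y := by
        refine setIntegral_congr_fun measurableSet_Ioi fun x hx => ?_
        rw [integral_indicator measurableSet_Ioi, Measure.restrict_restrict measurableSet_Ioi,
          Ioi_inter_Ioi, max_eq_left (le_of_lt hx), integral_const_mul, mul_comm]
    _ = ∫ y in Ioi (0 : ℝ), ∫ x in Ioi (0 : ℝ), (Iio y).indicator (fun x => w x * g y) x :=
        integral_integral_swap (f := fun x y => F (x, y)) hF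
    _ = ∫ y in Ioi (0 : ℝ), g y * ∫ x in (0)..y, w x := by
        refine setIntegral_congr_fun measurableSet_Ioi fun y hy => ?_
        rw [integral_indicator measurableSet_Iio, Measure.restrict_restrict measurableSet_Iio,
          Iio_inter_Ioi, integral_mul_const, intervalIntegral.integral_of_le (le_of_lt hy),
          integral_Ioc_eq_integral_Ioo, mul_comm]

theorem intervalIntegral_mul_exp_neg_mul (c y : ℝ) :
    ∫ x in (0)..y, c * exp (-(c * x)) = 1 - exp (-(c * y)) := by
  rw [intervalIntegral.integral_eq_sub_of_hasDerivAt (fun x _ => hasDerivAt_neg_exp_neg_mul c x)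
    (Continuous.intervalIntegrable (by fun_prop) _ _)]
  simp only [mul_zero, neg_zero, exp_zero]
  ring

/-- Evaluation of the term T₆ in Proposition 3: for `Ω_g, Ω_h > 0`,
`∫₀^∞ (∫_x^∞ ln y · Ω_g e^{-Ω_g y} dy) Ω_h e^{-Ω_h x} dx
  = ∫₀^∞ (ln x e^{-Ω_g x} - Ei(-Ω_g x)) Ω_h e^{-Ω_h x} dx
  = ln((Ω_h+Ω_g)/Ω_g) - Ω_h (C + ln(Ω_h+Ω_g))/(Ω_h+Ω_g)`,
with `Ei(-t) = -∫_t^∞ e^{-u}/u du` and `C` the Euler–Mascheroni constant. -/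
theorem t6_integral_evaluation {Ωg Ωh : ℝ} (hΩg : 0 < Ωg) (hΩh : 0 < Ωh) :
    (∫ x in Set.Ioi (0 : ℝ),
        (∫ y in Set.Ioi x, Real.log y * (Ωg * Real.exp (-(Ωg * y)))) *
          (Ωh * Real.exp (-(Ωh * x)))) =
      (∫ x in Set.Ioi (0 : ℝ),
        (Real.log x * Real.exp (-(Ωg * x)) -
            (-(∫ u in Set.Ioi (Ωg * x), Real.exp (-u) / u))) *
          (Ωh * Real.exp (-(Ωh * x)))) ∧
    (∫ x in Set.Ioi (0 : ℝ),
        (∫ y in Set.Ioi x, Real.log y * (Ωg * Real.exp (-(Ωg * y)))) *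
          (Ωh * Real.exp (-(Ωh * x)))) =
      Real.log ((Ωh + Ωg) / Ωg) -
        Ωh * (Real.eulerMascheroniConstant + Real.log (Ωh + Ωg)) / (Ωh + Ωg) := by
  refine ⟨setIntegral_congr_fun measurableSet_Ioi fun x hx => ?_, ?_⟩
  · rw [integral_Ioi_log_mul_exp_neg_mul hΩg hx, sub_neg_eq_add]
  have hS : 0 < Ωh + Ωg := by positivity
  have hw : IntegrableOn (fun x => Ωh * exp (-(Ωh * x))) (Ioi 0) :=
    IntegrableOn.congr_fun ((exp_neg_integrableOn_Ioi 0 hΩh).const_mul Ωh)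
      (fun x _ => by rw [neg_mul]) measurableSet_Ioi
  have h_split : EqOn (fun y => log y * (Ωg * exp (-(Ωg * y))) * (1 - exp (-(Ωh * y))))
      (fun y => Ωg * (log y * exp (-(Ωg * y))) - Ωg * (log y * exp (-((Ωh + Ωg) * y))))
      (Ioi 0) := fun y _ => by
    simp only [show -((Ωh + Ωg) * y) = -(Ωg * y) + -(Ωh * y) by ring, exp_add]
    ring
  simp only [integral_Ioi_integral_Ioi_mul (integrableOn_log_mul_mul_exp_neg_mul hΩg) hw,
    intervalIntegral_mul_exp_neg_mul]
  rw [setIntegral_congr_fun measurableSet_Ioi h_split,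
    integral_sub ((integrableOn_log_mul_exp_neg_mul hΩg).const_mul Ωg)
      ((integrableOn_log_mul_exp_neg_mul hS).const_mul Ωg),
    integral_const_mul, integral_const_mul, integral_log_mul_exp_neg_mul hΩg,
    integral_log_mul_exp_neg_mul hS, log_div hS.ne' hΩg.ne']
  field_simp
  ring
end
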